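/- arXiv:1907.08038 — 4 statements merged into one kernel-verified Lean document; each statement's English description precedes it below -/
import Mathlib

section
/- Adding or removing a single trajectory changes the answer of any range query on a spatial histogram by at most 1; that is, the sensitivity of a range query is 1. -/
/-- sensitivity of a range query is 1.  Each trajectory `t`
contributes `contrib t ∈ {0,1}` to the answer of a range query (1 iff it
intersects the query region), and the query answer on a dataset `D` is the
sum of the contributions.  If two datasets differ in exactly one trajectory,
their query answers differ by at most 1. -/
theorem rangeQuery_sensitivity_one {T : Type*} [DecidableEq T]
    (contrib : T → ℝ) (hcontrib : ∀ t, contrib t = 0 ∨ contrib t = 1)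
    (D D' : Finset T) (hnbr : (symmDiff D D').card = 1) :
    |(∑ t ∈ D, contrib t) - ∑ t ∈ D', contrib t| ≤ 1 := by
  have hdiff : (∑ t ∈ D, contrib t) - ∑ t ∈ D', contrib t
      = (∑ t ∈ D \ D', contrib t) - ∑ t ∈ D' \ D, contrib t := by
    have h1 : ∑ t ∈ D, contrib t
        = (∑ t ∈ D \ D', contrib t) + ∑ t ∈ D ∩ D', contrib t :=
      by rw [add_comm, Finset.sum_inter_add_sum_sdiff]
    have h2 : ∑ t ∈ D', contrib t
        = (∑ t ∈ D' \ D, contrib t) + ∑ t ∈ D ∩ D', contrib t := by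
      rw [Finset.inter_comm, add_comm, Finset.sum_inter_add_sum_sdiff]
    rw [h1, h2]; ring
  rw [hdiff]
  have hcard : (D \ D').card + (D' \ D).card = 1 := by
    rw [← Finset.card_union_of_disjoint disjoint_sdiff_sdiff]
    simpa [symmDiff_def, Finset.sup_eq_union] using hnbr
  have hbound : ∀ s : Finset T, s.card ≤ 1 → 0 ≤ ∑ t ∈ s, contrib t ∧
      ∑ t ∈ s, contrib t ≤ 1 := by
    intro s hs
    constructor
    · exact Finset.sum_nonneg fun t _ => by rcases hcontrib t with h | h <;> simp [h]
    · calc ∑ t ∈ s, contrib t ≤ ∑ t ∈ s, 1 := by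
            exact Finset.sum_le_sum fun t _ => by rcases hcontrib t with h | h <;> simp [h]
        _ = s.card := by simp
        _ ≤ 1 := by exact_mod_cast hs
  obtain ⟨h1a, h1b⟩ := hbound (D \ D') (by omega)
  obtain ⟨h2a, h2b⟩ := hbound (D' \ D) (by omega)
  rw [abs_le]; constructor <;> linarith
end

section
/- The Laplace mechanism, which outputs q(H) + ν with ν ~ Laplace(Δq/ε), is ε-differentially private for any query q with sensitivity Δq. -/
/-- Laplace mechanism: the mechanism outputting `q(H) + ν` with
`ν ~ Laplace(Δq/ε)` is `ε`-differentially private: for any pair of neighboring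
inputs (whose query answers hence differ by at most the sensitivity `Δq`), the
output density at any point `y` changes by at most a multiplicative `e^ε`. -/
theorem laplace_mechanism_dp {Hist : Type*}
    (Nbr : Hist → Hist → Prop) (q : Hist → ℝ) (Δq ε : ℝ)
    (hΔ : 0 < Δq) (hε : 0 < ε)
    (hsens : ∀ H H', Nbr H H' → |q H - q H'| ≤ Δq)
    (H H' : Hist) (hH : Nbr H H') (y : ℝ) :
    (1 / (2 * (Δq / ε))) * Real.exp (-|y - q H| / (Δq / ε))
      ≤ Real.exp ε * ((1 / (2 * (Δq / ε))) * Real.exp (-|y - q H'| / (Δq / ε))) := by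
  have hb : 0 < Δq / ε := div_pos hΔ hε
  have hc : (0:ℝ) < 1 / (2 * (Δq / ε)) := by positivity
  rw [mul_left_comm]
  apply mul_le_mul_of_nonneg_left _ hc.le
  rw [← Real.exp_add, Real.exp_le_exp]
  have htri : |y - q H'| ≤ |y - q H| + Δq := by
    calc |y - q H'| = |(y - q H) + (q H - q H')| := by ring_nf
    _ ≤ |y - q H| + |q H - q H'| := abs_add_le _ _
    _ ≤ |y - q H| + Δq := by linarith [hsens H H' hH]
  have key : (|y - q H'| - |y - q H|) / (Δq / ε) ≤ ε := by
    rw [div_le_iff₀ hb]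
    have : ε * (Δq / ε) = Δq := by field_simp
    rw [this]; linarith [htri]
  have : -|y - q H| / (Δq / ε) - -|y - q H'| / (Δq / ε)
      = (|y - q H'| - |y - q H|) / (Δq / ε) := by ring
  linarith
end

section
/- The exponential mechanism, which outputs candidate r ∈ R with probability proportional to exp(ε·u(H,r)/(2Δu)), is ε-differentially private, where Δu is the sensitivity of the utility function u. -/
/-- exponential mechanism: outputting candidate `r ∈ R` with
probability proportional to `exp(ε·u(H,r)/(2Δu))` is `ε`-differentially
private, where `Δu` bounds `|u(H,r) − u(H*,r)|` over neighboring datasets. -/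
theorem exponential_mechanism_dp {Hist : Type*} {R : Type*} [Fintype R] [Nonempty R]
    (Nbr : Hist → Hist → Prop) (u : Hist → R → ℝ) (Δu ε : ℝ)
    (hΔ : 0 < Δu) (hε : 0 < ε)
    (hsens : ∀ H H', Nbr H H' → ∀ r, |u H r - u H' r| ≤ Δu)
    (H H' : Hist) (hH : Nbr H H') (r : R) :
    Real.exp (ε * u H r / (2 * Δu)) / (∑ r' : R, Real.exp (ε * u H r' / (2 * Δu)))
      ≤ Real.exp ε *
        (Real.exp (ε * u H' r / (2 * Δu)) /
          ∑ r' : R, Real.exp (ε * u H' r' / (2 * Δu))) := by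
  set a : R → ℝ := fun r => Real.exp (ε * u H r / (2 * Δu)) with ha
  set b : R → ℝ := fun r => Real.exp (ε * u H' r / (2 * Δu)) with hb
  have h2Δ : (0:ℝ) < 2 * Δu := by linarith
  have key : a r ≤ Real.exp (ε/2) * b r := by
    rw [← Real.exp_add]
    apply Real.exp_le_exp.2
    have := (abs_le.1 (hsens H H' hH r)).2
    rw [div_le_iff₀ h2Δ] at *
    have h1 : ε * u H r / (2 * Δu) * (2 * Δu) = ε * u H r := by field_simp
    have h2 : (ε / 2 + ε * u H' r / (2 * Δu)) * (2 * Δu)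
        = ε * Δu + ε * u H' r := by field_simp
    rw [h2]
    nlinarith
  have key' : ∀ s, b s ≤ Real.exp (ε/2) * a s := by
    intro s
    rw [← Real.exp_add]
    apply Real.exp_le_exp.2
    have := (abs_le.1 (hsens H H' hH s)).1
    rw [div_le_iff₀ h2Δ]
    have h2 : (ε / 2 + ε * u H s / (2 * Δu)) * (2 * Δu)
        = ε * Δu + ε * u H s := by field_simp
    have h1 : ε * u H' s / (2 * Δu) * (2 * Δu) = ε * u H' s := by field_simp
    rw [h2]
    nlinarith
  have hsa : (0:ℝ) < ∑ r' : R, a r' :=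
    Finset.sum_pos (fun i _ => Real.exp_pos _) Finset.univ_nonempty
  have hsb : (0:ℝ) < ∑ r' : R, b r' :=
    Finset.sum_pos (fun i _ => Real.exp_pos _) Finset.univ_nonempty
  have hsum : Real.exp (-(ε/2)) * (∑ r' : R, b r') ≤ ∑ r' : R, a r' := by
    have : (∑ r' : R, b r') ≤ Real.exp (ε/2) * ∑ r' : R, a r' := by
      rw [Finset.mul_sum]
      exact Finset.sum_le_sum (fun i _ => key' i)
    rw [Real.exp_neg, inv_mul_le_iff₀ (Real.exp_pos _)]
    linarith [this]
  have main : a r / (∑ r' : R, a r')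
      ≤ (Real.exp (ε/2) * b r) / (Real.exp (-(ε/2)) * ∑ r' : R, b r') :=
    div_le_div₀ (by positivity) key (by positivity) hsum
  calc a r / (∑ r' : R, a r')
      ≤ (Real.exp (ε/2) * b r) / (Real.exp (-(ε/2)) * ∑ r' : R, b r') := main
    _ = Real.exp ε * (b r / ∑ r' : R, b r') := by
        rw [mul_div_mul_comm, ← Real.exp_sub]
        ring_nf
end

section
/- For probability distributions p (true, = H/n) and q, q' (successive estimates) on a finite cell set, with the multiplicative update q'(x) ∝ q(x)·exp(a(x)·η) where a(x) ∈ [0,1] and |η| ≤ 1, the relative-entropy potential drop satisfies ψ(p‖q) − ψ(p‖q') ≥ η·(Σ_x a(x)p(x) − Σ_x a(x)q(x)) − η². -/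
lemma exp_le_quad {t : ℝ} (ht : |t| ≤ 1) : Real.exp t ≤ 1 + t + t ^ 2 := by
  have h := Real.exp_bound ht (n := 2) (by norm_num)
  have hsum : ∑ i ∈ Finset.range 2, t ^ i / (Nat.factorial i) = 1 + t := by
    simp [Finset.sum_range_succ, Nat.factorial]
  rw [hsum] at h
  have h2 : |Real.exp t - (1 + t)| ≤ t ^ 2 * (3 / 4) := by
    calc |Real.exp t - (1 + t)| ≤ |t| ^ 2 * ((2 : ℕ).succ / ((2 : ℕ).factorial * 2)) := h
    _ = t ^ 2 * (3 / 4) := by rw [sq_abs]; norm_num [Nat.factorial]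
  have := abs_le.mp h2
  nlinarith [sq_nonneg t]

/-- multiplicative-weights potential drop: for full-support
distributions `p, q` on a finite set and the update
`q'(x) = q(x)·exp(a(x)·η)/β` with `β = Σ_x q(x)·exp(a(x)·η)`, `a(x) ∈ [0,1]`
and `|η| ≤ 1`, the KL potential `ψ(p‖·)` drops by at least
`η·(Σ a·p − Σ a·q) − η²`. -/
theorem mw_potential_drop {X : Type*} [Fintype X]
    (p q : X → ℝ) (a : X → ℝ) (η : ℝ)
    (hp : ∀ x, 0 < p x) (hq : ∀ x, 0 < q x)
    (hpsum : ∑ x, p x = 1) (hqsum : ∑ x, q x = 1)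
    (ha : ∀ x, 0 ≤ a x ∧ a x ≤ 1) (hη : |η| ≤ 1) :
    (∑ x, p x * Real.log (p x / q x)) -
      (∑ x, p x * Real.log (p x /
        (q x * Real.exp (a x * η) / ∑ y, q y * Real.exp (a y * η))))
      ≥ η * ((∑ x, a x * p x) - ∑ x, a x * q x) - η ^ 2 := by
  set β : ℝ := ∑ y, q y * Real.exp (a y * η) with hβ
  have hne : Nonempty X := by
    by_contra h
    rw [not_nonempty_iff] at h
    simp at hqsum
  have hβpos : 0 < β := Finset.sum_pos (fun y _ => mul_pos (hq y) (Real.exp_pos _)) Finset.univ_nonempty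
  -- rewrite the difference
  have key : (∑ x, p x * Real.log (p x / q x)) -
      (∑ x, p x * Real.log (p x / (q x * Real.exp (a x * η) / β)))
      = η * (∑ x, a x * p x) - Real.log β := by
    rw [← Finset.sum_sub_distrib]
    have : ∀ x, p x * Real.log (p x / q x) -
        p x * Real.log (p x / (q x * Real.exp (a x * η) / β))
        = (a x * η) * p x - p x * Real.log β := by
      intro x
      have hpx := hp x; have hqx := hq x
      rw [Real.log_div hpx.ne' hqx.ne',
        Real.log_div hpx.ne' (by positivity),
        Real.log_div (by positivity) hβpos.ne',
        Real.log_mul hqx.ne' (Real.exp_pos _).ne', Real.log_exp]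
      ring
    rw [Finset.sum_congr rfl (fun x _ => this x), Finset.sum_sub_distrib,
      ← Finset.sum_mul, hpsum]
    have : ∑ x, a x * η * p x = η * ∑ x, a x * p x := by
      rw [Finset.mul_sum]; exact Finset.sum_congr rfl fun x _ => by ring
    rw [this]; ring
  rw [key]
  -- bound log β
  have hβle : β ≤ 1 + (η * ∑ x, a x * q x + η ^ 2) := by
    have h1 : β ≤ ∑ x, q x * (1 + a x * η + (a x * η) ^ 2) := by
      apply Finset.sum_le_sum
      intro x _
      have haη : |a x * η| ≤ 1 := by
        rw [abs_mul]
        have := (ha x).1; have := (ha x).2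
        calc |a x| * |η| ≤ 1 * 1 := by
              apply mul_le_mul _ hη (abs_nonneg _) zero_le_one
              rw [abs_of_nonneg (ha x).1]; exact (ha x).2
        _ = 1 := by ring
      exact mul_le_mul_of_nonneg_left (exp_le_quad haη) (hq x).le
    have h2 : ∑ x, q x * (1 + a x * η + (a x * η) ^ 2)
        = (∑ x, q x) + η * (∑ x, a x * q x) + η ^ 2 * ∑ x, (a x) ^ 2 * q x := by
      rw [Finset.mul_sum, Finset.mul_sum, ← Finset.sum_add_distrib,
        ← Finset.sum_add_distrib]
      exact Finset.sum_congr rfl fun x _ => by ring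
    have h3 : ∑ x, (a x) ^ 2 * q x ≤ 1 := by
      rw [← hqsum]
      apply Finset.sum_le_sum
      intro x _
      have h1 : (a x) ^ 2 ≤ 1 := by nlinarith [(ha x).1, (ha x).2]
      calc (a x) ^ 2 * q x ≤ 1 * q x := mul_le_mul_of_nonneg_right h1 (hq x).le
      _ = q x := one_mul _
    have h4 : 0 ≤ ∑ x, (a x) ^ 2 * q x :=
      Finset.sum_nonneg fun x _ => mul_nonneg (sq_nonneg _) (hq x).le
    nlinarith [sq_nonneg η]
  have hlog : Real.log β ≤ η * (∑ x, a x * q x) + η ^ 2 := by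
    calc Real.log β ≤ β - 1 := Real.log_le_sub_one_of_pos hβpos
    _ ≤ η * (∑ x, a x * q x) + η ^ 2 := by linarith
  nlinarith [hlog]
end
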